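/- Let A be a unital C*-algebra, π : G → A a partial representation, {P_i}_{i ∈ J} projections in A such that π(r)π(r)* commutes with π(s)P_jπ(s)* and π(r)P_iπ(r)* commutes with π(s)P_jπ(s)* for all r, s ∈ G and i, j ∈ J, and let φ : C(X_G, ℂ) → A be a unital *-homomorphism with φ(1_{(r,i)}) = π(r) P_i π(r)* for i ∈ J and φ(1_{(r,0)}) = π(r) π(r)* for all r ∈ G. Let R ⊆ C(X_G, ℂ) and suppose φ(f) = 0 for every f ∈ R. Then φ(g) = 0 for every g ∈ C(X_G, ℂ) vanishing on Ω_R; consequently φ factors through the restriction *-homomorphism C(X_G, ℂ) → C(Ω_R, ℂ). -/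
import Mathlib


/-- The space `X_G`: subsets `ξ` of `G × I` (with `I = J ⊔ {0}` realized as `Option J`,
`none` playing the role of `0`), identified with points of `{0,1}^(G × I)` with the
product topology, such that `(e, 0) ∈ ξ` and `(r, i) ∈ ξ` implies `(r, 0) ∈ ξ`. -/
def XG (G : Type*) [Group G] (J : Type*) : Set ((G × Option J) → Bool) :=
  {ξ | ξ (1, none) = true ∧ ∀ (r : G) (i : Option J), ξ (r, i) = true → ξ (r, none) = true}

/-- The translate `tξ = { (t r, i) : (r, i) ∈ ξ }`: `(g, i) ∈ tξ` iff `(t⁻¹ g, i) ∈ ξ`. -/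
def act {G : Type*} [Group G] {J : Type*} (t : G) (ξ : (G × Option J) → Bool) :
    (G × Option J) → Bool :=
  fun x => ξ (t⁻¹ * x.1, x.2)

/-- If `ξ ∈ X_G` and `(t, 0) ∈ ξ`, then `t⁻¹ξ ∈ X_G`. -/
theorem act_inv_mem {G : Type*} [Group G] {J : Type*} {t : G}
    {ξ : (G × Option J) → Bool} (hξ : ξ ∈ XG G J) (h : ξ (t, none) = true) :
    act t⁻¹ ξ ∈ XG G J := by
  constructor
  · show ξ (t⁻¹⁻¹ * 1, none) = true
    rw [inv_inv, mul_one]; exact h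
  · intro r i hri
    exact hξ.2 _ _ hri

/-- The characteristic function `1_{r^i} : ξ ↦ [ (r,i) ∈ ξ ]`, for `x = (r, i) ∈ G × I`,
as an element of `C(X_G, ℂ)`. -/
noncomputable def chiG {G : Type*} [Group G] {J : Type*} (x : G × Option J) :
    C(XG G J, ℂ) :=
  ⟨fun ξ => if (ξ : (G × Option J) → Bool) x = true then 1 else 0, by
    have h1 : Continuous fun ξ : XG G J => (ξ : (G × Option J) → Bool) x :=
      (continuous_apply x).comp continuous_subtype_val
    exact (continuous_of_discreteTopology
      (f := fun b : Bool => if b = true then (1 : ℂ) else 0)).comp h1⟩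

/-- Given `R ⊆ C(X_G, ℂ)`, the set
`Ω_R = { ξ ∈ X_G : f(t⁻¹ξ) = 0 for every f ∈ R and every t ∈ G with (t,0) ∈ ξ }`. -/
def OmegaR {G : Type*} [Group G] {J : Type*} (R : Set C(XG G J, ℂ)) :
    Set (XG G J) :=
  {ξ | ∀ f ∈ R, ∀ t : G, ∀ h : (ξ : (G × Option J) → Bool) (t, none) = true,
    f ⟨act t⁻¹ (ξ : (G × Option J) → Bool), act_inv_mem ξ.2 h⟩ = 0}

section AuxPF

variable {G : Type*} [Group G] {J : Type*}

theorem XG_isClosed : IsClosed (XG G J) := by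
  have key : ∀ (x : G × Option J) (b : Bool),
      IsClosed {ξ : (G × Option J) → Bool | ξ x = b} :=
    fun x b => by
    have : {ξ : (G × Option J) → Bool | ξ x = b} = (fun ξ : (G × Option J) → Bool => ξ x) ⁻¹' {b} := rfl
    rw [this]
    exact (isClosed_discrete ({b} : Set Bool)).preimage (continuous_apply x)
  have : XG G J = {ξ : (G × Option J) → Bool | ξ (1, none) = true} ∩
      ⋂ (r : G) (i : Option J),
        ({ξ : (G × Option J) → Bool | ξ (r, i) = false} ∪ {ξ | ξ (r, none) = true}) := by
    ext ξ
    simp only [XG, Set.mem_setOf_eq, Set.mem_inter_iff, Set.mem_iInter, Set.mem_union]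
    refine and_congr Iff.rfl (forall_congr' fun r => forall_congr' fun i => ?_)
    rcases Bool.eq_false_or_eq_true (ξ (r, i)) with h | h <;> simp [h]
  rw [this]
  exact (key _ true).inter (isClosed_iInter fun r => isClosed_iInter fun i =>
    (key _ false).union (key _ true))

instance : CompactSpace (XG G J) := isCompact_iff_compactSpace.mp XG_isClosed.isCompact


theorem chiG_apply (x : G × Option J) (ξ : XG G J) :
    chiG x ξ = if (ξ : (G × Option J) → Bool) x = true then 1 else 0 := rfl

theorem chiG_mul_self (x : G × Option J) : chiG (G := G) (J := J) x * chiG x = chiG x := by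
  ext ξ
  simp only [ContinuousMap.mul_apply, chiG_apply]
  split <;> simp

theorem chiG_star (x : G × Option J) : star (chiG (G := G) (J := J) x) = chiG x := by
  ext ξ
  simp only [ContinuousMap.star_apply, chiG_apply]
  split <;> simp

/-- The continuous total version of `ξ ↦ t⁻¹ξ`: if `(t,0) ∈ ξ` it is `t⁻¹ξ`, else `ξ`. -/
def mMap (t : G) : C(XG G J, XG G J) where
  toFun ξ := ⟨fun x => ((ξ : (G × Option J) → Bool) (t, none) &&
        (ξ : (G × Option J) → Bool) (t * x.1, x.2)) ||
      (!(ξ : (G × Option J) → Bool) (t, none) && (ξ : (G × Option J) → Bool) x), by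
    rcases Bool.eq_false_or_eq_true ((ξ : (G × Option J) → Bool) (t, none)) with h | h
    · constructor
      · simp only [h, Bool.true_and, Bool.not_true, Bool.false_and, Bool.or_false, mul_one]
      · intro r i hri
        simp only [h, Bool.true_and, Bool.not_true, Bool.false_and, Bool.or_false] at hri ⊢
        exact ξ.2.2 _ _ hri
    · constructor
      · simp [h, ξ.2.1]
      · intro r i hri
        simp only [h, Bool.false_and, Bool.not_false, Bool.true_and, Bool.false_or] at hri ⊢
        exact ξ.2.2 _ _ hri
⟩
  continuous_toFun := by
    refine Continuous.subtype_mk (continuous_pi fun x => ?_) _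
    have h1 : Continuous fun ξ : XG G J =>
        (((ξ : (G × Option J) → Bool) (t, none), (ξ : (G × Option J) → Bool) (t * x.1, x.2)),
          (ξ : (G × Option J) → Bool) x) :=
      (((continuous_apply _).comp continuous_subtype_val).prodMk
        ((continuous_apply _).comp continuous_subtype_val)).prodMk
        ((continuous_apply _).comp continuous_subtype_val)
    exact (continuous_of_discreteTopology
      (f := fun p : (Bool × Bool) × Bool => (p.1.1 && p.1.2) || (!p.1.1 && p.2))).comp h1

theorem mMap_coe_of_true {t : G} {ξ : XG G J}
    (h : (ξ : (G × Option J) → Bool) (t, none) = true) :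
    ((mMap t ξ : XG G J) : (G × Option J) → Bool) = act t⁻¹ (ξ : (G × Option J) → Bool) := by
  funext x
  show (_ || _) = _
  simp [h, act, inv_inv]

theorem mMap_eq_of_true {t : G} {ξ : XG G J}
    (h : (ξ : (G × Option J) → Bool) (t, none) = true) :
    mMap t ξ = ⟨act t⁻¹ (ξ : (G × Option J) → Bool), act_inv_mem ξ.2 h⟩ :=
  Subtype.ext (mMap_coe_of_true h)

theorem T_gen (t : G) (x : G × Option J) :
    chiG (t, none) * (chiG x).comp (mMap t) = chiG (t, none) * chiG (t * x.1, x.2) := by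
  ext ξ
  simp only [ContinuousMap.mul_apply, ContinuousMap.comp_apply, chiG_apply]
  rcases Bool.eq_false_or_eq_true ((ξ : (G × Option J) → Bool) (t, none)) with h | h
  · have : ((mMap t ξ : XG G J) : (G × Option J) → Bool) x =
        (ξ : (G × Option J) → Bool) (t * x.1, x.2) := by
      rw [mMap_coe_of_true h]; simp [act, inv_inv]
    rw [this]
  · simp [h]

theorem T_apply_true (t : G) (f : C(XG G J, ℂ)) {ξ : XG G J}
    (h : (ξ : (G × Option J) → Bool) (t, none) = true) :
    ((chiG (t, none) * f.comp (mMap t) : C(XG G J, ℂ)) ξ) =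
      f ⟨act t⁻¹ (ξ : (G × Option J) → Bool), act_inv_mem ξ.2 h⟩ := by
  simp [ContinuousMap.mul_apply, ContinuousMap.comp_apply, chiG_apply, h,
    mMap_eq_of_true h]

theorem T_apply_false (t : G) (f : C(XG G J, ℂ)) {ξ : XG G J}
    (h : (ξ : (G × Option J) → Bool) (t, none) = false) :
    ((chiG (t, none) * f.comp (mMap t) : C(XG G J, ℂ)) ξ) = 0 := by
  simp [ContinuousMap.mul_apply, chiG_apply, h]

end AuxPF


set_option maxHeartbeats 1600000 in
/-- Let `A` be a unital C*-algebra, `π : G → A` a partial representation, `{P_i}_{i ∈ J}`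
projections in `A` with the stated commutation properties, and `φ : C(X_G, ℂ) → A` a
unital *-homomorphism with `φ(1_{(r,i)}) = π(r)P_iπ(r)*` for `i ∈ J` and
`φ(1_{(r,0)}) = π(r)π(r)*` for all `r ∈ G`.  Let `R ⊆ C(X_G, ℂ)` and suppose `φ(f) = 0`
for every `f ∈ R`.  Then `φ(g) = 0` for every `g ∈ C(X_G, ℂ)` vanishing on `Ω_R`;
consequently `φ` factors through the restriction *-homomorphism
`C(X_G, ℂ) → C(Ω_R, ℂ)`. -/
theorem phi_factors_through_restriction (G : Type*) [Group G] (J : Type*)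
    (A : Type*) [CStarAlgebra A] (π : G → A) (P : J → A)
    (hπe : π 1 = 1)
    (hπinv : ∀ g : G, π g⁻¹ = star (π g))
    (hπmul : ∀ g h : G, π g * π h * π h⁻¹ = π (g * h) * π h⁻¹)
    (hP : ∀ i : J, star (P i) = P i ∧ P i * P i = P i)
    (hcomm₁ : ∀ (r s : G) (j : J),
      Commute (π r * star (π r)) (π s * P j * star (π s)))
    (hcomm₂ : ∀ (r s : G) (i j : J),
      Commute (π r * P i * star (π r)) (π s * P j * star (π s)))
    (φ : C(XG G J, ℂ) →⋆ₐ[ℂ] A)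
    (hφ₁ : ∀ (r : G) (i : J), φ (chiG (r, some i)) = π r * P i * star (π r))
    (hφ₂ : ∀ r : G, φ (chiG (r, none)) = π r * star (π r))
    (R : Set C(XG G J, ℂ)) (hR : ∀ f ∈ R, φ f = 0) :
    (∀ g : C(XG G J, ℂ), (∀ ξ ∈ OmegaR R, g ξ = 0) → φ g = 0) ∧
    ∃ ψ : C(OmegaR R, ℂ) →⋆ₐ[ℂ] A,
      ∀ g : C(XG G J, ℂ), ψ (g.restrict (OmegaR R)) = φ g := by
  -- basic partial representation identities
  have lem1 : ∀ g : G, π g * star (π g) * π g = π g := by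
    intro g
    have h1 := hπmul g g⁻¹
    rw [inv_inv, mul_inv_cancel, hπe, one_mul, hπinv] at h1
    exact h1
  have lem2 : ∀ g h : G, π g⁻¹ * π g * π h = π g⁻¹ * π (g * h) := by
    intro g h
    have h1 := hπmul h⁻¹ g⁻¹
    rw [inv_inv] at h1
    have h2 := congrArg star h1
    simp only [star_mul, ← hπinv, inv_inv, mul_inv_rev, mul_assoc] at h2 ⊢
    exact h2
  have lem3 : ∀ t r : G, π t * π r = π (t * r) * (star (π r) * π r) := by
    intro t r
    calc π t * π r = π t * (π r * star (π r) * π r) := by rw [lem1 r]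
      _ = (π t * π r * π r⁻¹) * π r := by rw [hπinv]; noncomm_ring
      _ = (π (t * r) * π r⁻¹) * π r := by rw [hπmul t r]
      _ = π (t * r) * (star (π r) * π r) := by rw [hπinv]; noncomm_ring
  have lem4 : ∀ t r : G, π t * star (π t) * π (t * r) = π t * π r := by
    intro t r
    have h1 := lem2 t⁻¹ (t * r)
    rw [inv_inv, inv_mul_cancel_left] at h1
    rw [hπinv] at h1
    exact h1
  have e_idem : ∀ r : G, (star (π r) * π r) * (star (π r) * π r) = star (π r) * π r := by
    intro r
    calc (star (π r) * π r) * (star (π r) * π r)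
        = star (π r) * (π r * star (π r) * π r) := by noncomm_ring
      _ = star (π r) * π r := by rw [lem1 r]
  -- the key covariance computation on a single "projection" Q
  have covQ : ∀ (t r : G) (Q : A),
      (∀ s : G, (star (π s) * π s) * Q = Q * (star (π s) * π s)) →
      π t * (π r * Q * star (π r)) * star (π t)
        = (π t * star (π t)) * (π (t * r) * Q * star (π (t * r))) := by
    intro t r Q hQc
    have he : star (star (π r) * π r) = star (π r) * π r := by
      rw [star_mul, star_star]
    have eQe : (star (π r) * π r) * Q * (star (π r) * π r) = (star (π r) * π r) * Q := by
      rw [hQc r, mul_assoc, e_idem r, ← hQc r]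
    have hL : π t * (π r * Q * star (π r)) * star (π t)
        = π (t * r) * ((star (π r) * π r) * Q) * star (π (t * r)) := by
      calc π t * (π r * Q * star (π r)) * star (π t)
          = (π t * π r) * Q * star (π t * π r) := by rw [star_mul]; noncomm_ring
        _ = (π (t * r) * (star (π r) * π r)) * Q *
              star (π (t * r) * (star (π r) * π r)) := by rw [lem3 t r]
        _ = π (t * r) * ((star (π r) * π r) * Q * (star (π r) * π r)) * star (π (t * r)) := by
              rw [star_mul, he]; noncomm_ring
        _ = π (t * r) * ((star (π r) * π r) * Q) * star (π (t * r)) := by rw [eQe]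
    have hRt : (π t * star (π t)) * (π (t * r) * Q * star (π (t * r)))
        = π (t * r) * ((star (π r) * π r) * Q) * star (π (t * r)) := by
      calc (π t * star (π t)) * (π (t * r) * Q * star (π (t * r)))
          = (π t * star (π t) * π (t * r)) * Q * star (π (t * r)) := by noncomm_ring
        _ = (π t * π r) * Q * star (π (t * r)) := by rw [lem4 t r]
        _ = (π (t * r) * (star (π r) * π r)) * Q * star (π (t * r)) := by rw [lem3 t r]
        _ = π (t * r) * ((star (π r) * π r) * Q) * star (π (t * r)) := by noncomm_ring
    rw [hL, hRt]
  have e_comm : ∀ (s : G) (i : J), (star (π s) * π s) * P i = P i * (star (π s) * π s) := by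
    intro s i
    have h1 := hcomm₁ s⁻¹ 1 i
    rw [hπe, star_one, one_mul, mul_one, hπinv, star_star] at h1
    exact h1
  -- covariance on the generators
  have covChi : ∀ (t : G) (x : G × Option J),
      π t * φ (chiG x) * star (π t) = φ (chiG (t, none)) * φ (chiG (t * x.1, x.2)) := by
    rintro t ⟨r, i⟩
    cases i with
    | none =>
        rw [hφ₂ r, hφ₂ (t * r), hφ₂ t]
        have := covQ t r 1 (fun s => by rw [mul_one, one_mul])
        simpa [mul_one] using this
    | some i =>
        rw [hφ₁ r i, hφ₁ (t * r) i, hφ₂ t]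
        exact covQ t r (P i) (fun s => e_comm s i)
  -- continuity of φ
  have hφcont : Continuous φ :=
    AddMonoidHomClass.continuous_of_bound φ 1
      (fun f => by simpa using NonUnitalStarAlgHom.norm_apply_le φ f)
  -- Stone–Weierstrass: the star subalgebra generated by the chiG is dense
  have hBdense : Dense ((StarAlgebra.adjoin ℂ
      (Set.range (chiG (G := G) (J := J)))) : Set C(XG G J, ℂ)) := by
    set B := StarAlgebra.adjoin ℂ (Set.range (chiG (G := G) (J := J)))
    have hsep : B.SeparatesPoints := by
      intro ξ η hne
      have : ∃ x : G × Option J, (ξ : (G × Option J) → Bool) x ≠ (η : _ → Bool) x := by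
        by_contra hc
        push_neg at hc
        exact hne (Subtype.ext (funext hc))
      obtain ⟨x, hx⟩ := this
      have hv : chiG x ξ ≠ chiG x η := by
        rw [chiG_apply, chiG_apply]
        rcases Bool.eq_false_or_eq_true ((ξ : (G × Option J) → Bool) x) with h | h <;>
          rcases Bool.eq_false_or_eq_true ((η : (G × Option J) → Bool) x) with h' | h'
        · exact absurd (h.trans h'.symm) hx
        · rw [h, h']; simp
        · rw [h, h']; simp
        · exact absurd (h.trans h'.symm) hx
      exact ⟨_, ⟨chiG x, StarAlgebra.subset_adjoin ℂ _ ⟨x, rfl⟩, rfl⟩, hv⟩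
    have htop := ContinuousMap.starSubalgebra_topologicalClosure_eq_top_of_separatesPoints B hsep
    rw [dense_iff_closure_eq]
    have h2 : (B.topologicalClosure : Set C(XG G J, ℂ)) = Set.univ := by
      rw [htop]; rfl
    rw [← h2]; rfl
  -- full covariance
  have covF : ∀ (t : G) (f : C(XG G J, ℂ)),
      φ (chiG (t, none) * f.comp (mMap t)) = π t * φ f * star (π t) := by
    intro t
    have hkey : star (π t) * π t = φ (chiG (t⁻¹, none)) := by
      rw [hφ₂ t⁻¹, hπinv t, star_star]
    have hπtt : π t * φ (chiG (t⁻¹, none)) = π t := by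
      rw [← hkey, ← mul_assoc, lem1 t]
    set L : C(XG G J, ℂ) → A := fun f => φ (chiG (t, none) * f.comp (mMap t)) with hL
    set S : C(XG G J, ℂ) → A := fun f => π t * φ f * star (π t) with hS
    have hLc : Continuous L :=
      hφcont.comp ((continuous_mul_left _).comp (ContinuousMap.continuous_precomp (mMap t)))
    have hSc : Continuous S :=
      (continuous_mul_right (star (π t))).comp ((continuous_mul_left (π t)).comp hφcont)
    have hLmul : ∀ f g : C(XG G J, ℂ), L (f * g) = L f * L g := by
      intro f g
      have : chiG (t, none) * (f * g).comp (mMap t)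
          = (chiG (t, none) * f.comp (mMap t)) * (chiG (t, none) * g.comp (mMap t)) := by
        ext ξ
        simp only [ContinuousMap.mul_apply, ContinuousMap.comp_apply, chiG_apply]
        split <;> ring
      simp only [hL]
      rw [this, map_mul]
    have hSmul : ∀ f g : C(XG G J, ℂ), S (f * g) = S f * S g := by
      intro f g
      symm
      have h1 : φ f * (star (π t) * π t) * φ g = φ (chiG (t⁻¹, none)) * φ (f * g) := by
        rw [hkey, ← map_mul, ← map_mul, ← map_mul]
        congr 1
        ext ξ
        simp only [ContinuousMap.mul_apply]
        ring
      calc S f * S g = π t * (φ f * (star (π t) * π t) * φ g) * star (π t) := by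
            simp only [hS]; noncomm_ring
        _ = π t * (φ (chiG (t⁻¹, none)) * φ (f * g)) * star (π t) := by rw [h1]
        _ = (π t * φ (chiG (t⁻¹, none))) * φ (f * g) * star (π t) := by noncomm_ring
        _ = π t * φ (f * g) * star (π t) := by rw [hπtt]
        _ = S (f * g) := rfl
    have hgen : ∀ f, f ∈ StarAlgebra.adjoin ℂ (Set.range (chiG (G := G) (J := J))) →
        L f = S f := by
      intro f hf
      induction hf using StarAlgebra.adjoin_induction with
      | mem x hx =>
          obtain ⟨⟨r, i⟩, rfl⟩ := hx
          simp only [hL, hS]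
          rw [T_gen, map_mul]
          exact (covChi t (r, i)).symm
      | algebraMap c =>
          simp only [hL, hS]
          have h1 : (algebraMap ℂ C(XG G J, ℂ) c).comp (mMap t)
              = algebraMap ℂ C(XG G J, ℂ) c := by ext ξ; rfl
          rw [h1, map_mul, AlgHomClass.commutes, hφ₂ t,
            mul_assoc, ← Algebra.commutes c (star (π t)), ← mul_assoc]
      | add x y hx hy ihx ihy =>
          have hadd : chiG (t, none) * (x + y).comp (mMap t)
              = chiG (t, none) * x.comp (mMap t) + chiG (t, none) * y.comp (mMap t) := by
            rw [ContinuousMap.add_comp, mul_add]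
          simp only [hL, hS] at ihx ihy ⊢
          rw [hadd, map_add, ihx, ihy, map_add]
          noncomm_ring
      | mul x y hx hy ihx ihy => rw [hLmul, hSmul, ihx, ihy]
      | star x hx ihx =>
          have hstar : chiG (t, none) * (star x).comp (mMap t)
              = star (chiG (t, none) * x.comp (mMap t)) := by
            ext ξ
            simp only [ContinuousMap.mul_apply, ContinuousMap.comp_apply, chiG_apply,
              ContinuousMap.star_apply]
            split <;> simp
          simp only [hL, hS] at ihx ⊢
          rw [hstar, map_star, ihx]
          simp only [star_mul, star_star, mul_assoc]
          rw [map_star]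
    have := Continuous.ext_on hBdense hLc hSc hgen
    intro f
    exact congrFun this f
  have part1 : ∀ g : C(XG G J, ℂ), (∀ ξ ∈ OmegaR R, g ξ = 0) → φ g = 0 := by
    intro g hg
    set I : Ideal C(XG G J, ℂ) := RingHom.ker φ with hI
    have hIc : IsClosed (I : Set C(XG G J, ℂ)) := by
      have h1 : (I : Set C(XG G J, ℂ)) = φ ⁻¹' {0} := by
        ext f; simp [hI, RingHom.mem_ker]
      rw [h1]
      exact isClosed_singleton.preimage hφcont
    have hIeq : ContinuousMap.idealOfSet ℂ (ContinuousMap.setOfIdeal I) = I := by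
      rw [ContinuousMap.idealOfSet_ofIdeal_eq_closure, Ideal.closure_eq_of_isClosed _ hIc]
    have hsub : ∀ ξ : XG G J, ξ ∉ ContinuousMap.setOfIdeal I → ξ ∈ OmegaR R := by
      intro ξ hξ f hf t ht
      have hT : chiG (t, none) * f.comp (mMap t) ∈ I := by
        have h0 : φ (chiG (t, none) * f.comp (mMap t)) = 0 := by
          rw [covF t f, hR f hf, mul_zero, zero_mul]
        simpa [hI, RingHom.mem_ker] using h0
      have h0 := ContinuousMap.notMem_setOfIdeal.mp hξ hT
      rwa [T_apply_true t f ht] at h0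
    have hgI : g ∈ I := by
      rw [← hIeq, ContinuousMap.mem_idealOfSet]
      intro ξ hξ
      exact hg ξ (hsub ξ hξ)
    simpa [hI, RingHom.mem_ker] using hgI
  refine ⟨part1, ?_⟩
  have hΩclosed : IsClosed (OmegaR R) := by
    have heq : OmegaR R = ⋂ (f : C(XG G J, ℂ)) (_ : f ∈ R) (t : G),
        {ξ : XG G J | (chiG (t, none) * f.comp (mMap t) : C(XG G J, ℂ)) ξ = 0} := by
      ext ξ
      simp only [Set.mem_iInter, Set.mem_setOf_eq]
      constructor
      · intro hξ f hf t
        rcases Bool.eq_false_or_eq_true ((ξ : (G × Option J) → Bool) (t, none)) with h | h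
        · rw [T_apply_true t f h]
          exact hξ f hf t h
        · rw [T_apply_false t f h]
      · intro hξ f hf t ht
        have h0 := hξ f hf t
        rwa [T_apply_true t f ht] at h0
    rw [heq]
    exact isClosed_iInter fun f => isClosed_iInter fun _ => isClosed_iInter fun t =>
      isClosed_eq (map_continuous _) continuous_const
  choose sec hsec using fun g' : C(OmegaR R, ℂ) =>
    ContinuousMap.exists_restrict_eq hΩclosed g'
  have hrs : ∀ (x : C(OmegaR R, ℂ)) (ξ : OmegaR R), sec x (ξ : XG G J) = x ξ := by
    intro x ξ
    have h0 := DFunLike.congr_fun (hsec x) ξ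
    simpa using h0
  have key : ∀ h₁ h₂ : C(XG G J, ℂ),
      (∀ ξ : OmegaR R, h₁ (ξ : XG G J) = h₂ (ξ : XG G J)) → φ h₁ = φ h₂ := by
    intro h₁ h₂ hh
    have h0 : φ (h₁ - h₂) = 0 := part1 _ (fun ξ hξ => by
      simp only [ContinuousMap.sub_apply]
      rw [hh ⟨ξ, hξ⟩, sub_self])
    rw [map_sub, sub_eq_zero] at h0
    exact h0
  refine ⟨{ toFun := fun g' => φ (sec g')
            map_one' := ?_
            map_mul' := ?_
            map_zero' := ?_
            map_add' := ?_
            commutes' := ?_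
            map_star' := ?_ }, ?_⟩
  · show φ (sec 1) = 1
    rw [key (sec 1) 1 (fun ξ => by simp [hrs]), map_one]
  · intro x y
    show φ (sec (x * y)) = φ (sec x) * φ (sec y)
    rw [key (sec (x * y)) (sec x * sec y)
      (fun ξ => by simp [hrs, ContinuousMap.mul_apply]), map_mul]
  · show φ (sec 0) = 0
    rw [key (sec 0) 0 (fun ξ => by simp [hrs]), map_zero]
  · intro x y
    show φ (sec (x + y)) = φ (sec x) + φ (sec y)
    rw [key (sec (x + y)) (sec x + sec y)
      (fun ξ => by simp [hrs, ContinuousMap.add_apply]), map_add]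
  · intro c
    show φ (sec (algebraMap ℂ C(OmegaR R, ℂ) c)) = algebraMap ℂ A c
    rw [key (sec (algebraMap ℂ C(OmegaR R, ℂ) c)) (algebraMap ℂ C(XG G J, ℂ) c)
      (fun ξ => by simp [hrs]), AlgHomClass.commutes]
  · intro x
    show φ (sec (star x)) = star (φ (sec x))
    rw [key (sec (star x)) (star (sec x))
      (fun ξ => by simp [hrs, ContinuousMap.star_apply]), map_star]
  · intro g
    show φ (sec (g.restrict (OmegaR R))) = φ g
    exact key (sec (g.restrict (OmegaR R))) g (fun ξ => by
      rw [hrs]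
      simp)
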